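/- Let d₁, d₂ ≥ 1 and let (U_k, p_k)_{k∈K} and (V_l, q_l)_{l∈L} be finite weighted families of d₁×d₁ and d₂×d₂ unitaries respectively, each satisfying the first- and third-moment identities: for every Hermitian B of the appropriate size, Σ p · Σ_b U† E_{bb} U = I and Σ p · Σ_b (⟨b|U B U†|b⟩)² U† E_{bb} U = [(Tr B)² I + 2(Tr B)B + 2B² + Tr(B²) I]/((d+1)(d+2)) (with d = d₁ resp. d₂). Then for every Hermitian d₁×d₁ matrix A, every Hermitian d₂×d₂ matrix B, and every positive semidefinite σ on ℂ^{d₁}⊗ℂ^{d₂} with Tr σ = 1, writing A' = (d₁+1)A − Tr(A)·I and B' = (d₂+1)B − Tr(B)·I: Σ_{k,l} p_k q_l Σ_{b₁=0}^{d₁-1} Σ_{b₂=0}^{d₂-1} Tr[ σ · (U_k† E_{b₁b₁} U_k ⊗ V_l† E_{b₂b₂} V_l) ] · (⟨b₁|U_k A' U_k†|b₁⟩)² · (⟨b₂|V_l B' V_l†|b₂⟩)² ≤ 4·‖𝒮(A)‖·‖𝒮(B)‖, where ‖·‖ is the operator norm. -/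

import Mathlib

/-! The left-hand side is `Tr(σ (X ⊗ Y))`, where `X = Σ_k p_k Σ_b ⟨b|U_k A' U_k†|b⟩² U_k† E_bb U_k`
and `Y` is its analogue for `B'`. By the third-moment identity `X` is a polynomial in `A`, and
`(d+2)(𝒮(A) - X) = (2d+5)(Tr A + A)² + A² + (2d+4)(Tr A)² + (d+3) Tr(A²)` is positive semidefinite,
so `X ≤ 𝒮(A) ≤ ‖𝒮(A)‖`. Likewise `0 ≤ Y ≤ ‖𝒮(B)‖`, hence `X ⊗ Y ≤ ‖𝒮(A)‖ ‖𝒮(B)‖`, and pairing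
with the state `σ` gives the bound already without the factor `4`. -/

open Matrix Kronecker BigOperators
open scoped ComplexOrder

/-- `𝒮(O) := 2·{ [2·(Tr O)² + Tr(O²)]·I + 2·(Tr O)·O + 2·O² }`. -/
noncomputable def Smat {d : ℕ} (O : Matrix (Fin d) (Fin d) ℂ) : Matrix (Fin d) (Fin d) ℂ :=
  (2 : ℂ) • ((2 * (Matrix.trace O) ^ 2 + Matrix.trace (O * O)) • (1 : Matrix (Fin d) (Fin d) ℂ)
    + (2 * Matrix.trace O) • O + (2 : ℂ) • (O * O))

/-- The operator norm (largest singular value) of a complex matrix. -/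
noncomputable def opNorm {d : ℕ} (M : Matrix (Fin d) (Fin d) ℂ) : ℝ :=
  ‖(Matrix.toEuclideanCLM (𝕜 := ℂ) M : EuclideanSpace ℂ (Fin d) →L[ℂ] EuclideanSpace ℂ (Fin d))‖

/-- The first- and third-moment identities of a unitary 3-design ensemble. -/
def MomentIdentities {d : ℕ} {K : Type} [Fintype K]
    (U : K → Matrix (Fin d) (Fin d) ℂ) (p : K → ℝ) : Prop :=
  (∑ k, (p k : ℂ) • (∑ b : Fin d, (U k)ᴴ * Matrix.single b b 1 * U k) = 1) ∧
  (∀ B : Matrix (Fin d) (Fin d) ℂ, B.IsHermitian →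
    ∑ k, (p k : ℂ) • (∑ b : Fin d,
        ((U k * B * (U k)ᴴ) b b) ^ 2 • ((U k)ᴴ * Matrix.single b b 1 * U k))
      = (((d : ℂ) + 1) * ((d : ℂ) + 2))⁻¹ •
          (((Matrix.trace B) ^ 2 + Matrix.trace (B * B)) • (1 : Matrix (Fin d) (Fin d) ℂ)
            + (2 * Matrix.trace B) • B + (2 : ℂ) • (B * B)))

open scoped MatrixOrder

namespace Matrix

section Kronecker

variable {α l m n p : Type*}

lemma sub_kronecker [Ring α] (A B : Matrix l m α) (C : Matrix n p α) :
    (A - B) ⊗ₖ C = A ⊗ₖ C - B ⊗ₖ C :=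
  eq_sub_of_add_eq (by rw [← add_kronecker, sub_add_cancel])

lemma kronecker_sub [Ring α] (A : Matrix l m α) (B C : Matrix n p α) :
    A ⊗ₖ (B - C) = A ⊗ₖ B - A ⊗ₖ C :=
  eq_sub_of_add_eq (by rw [← kronecker_add, sub_add_cancel])

lemma trace_mul_kronecker_sum_smul [CommSemiring α] [Fintype m] [Fintype n] {ι κ : Type*}
    (σ : Matrix (m × n) (m × n) α) (s : Finset ι) (t : Finset κ) (a : ι → α)
    (M : ι → Matrix m m α) (b : κ → α) (N : κ → Matrix n n α) :
    (σ * ((∑ i ∈ s, a i • M i) ⊗ₖ ∑ j ∈ t, b j • N j)).trace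
      = ∑ i ∈ s, ∑ j ∈ t, a i * b j * (σ * (M i ⊗ₖ N j)).trace := by
  have h : (∑ i ∈ s, a i • M i) ⊗ₖ (∑ j ∈ t, b j • N j)
      = ∑ i ∈ s, ∑ j ∈ t, (a i * b j) • (M i ⊗ₖ N j) := by
    ext ⟨i₁, i₂⟩ ⟨j₁, j₂⟩
    simp only [kronecker_apply, sum_apply, smul_apply, smul_eq_mul, Finset.sum_mul_sum]
    exact Finset.sum_congr rfl fun _ _ ↦ Finset.sum_congr rfl fun _ _ ↦ by ring
  simp only [h, Matrix.mul_sum, trace_sum, mul_smul_comm, trace_smul, smul_eq_mul]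

end Kronecker

lemma IsHermitian.star_trace {R n : Type*} [AddCommMonoid R] [StarAddMonoid R] [Fintype n]
    {A : Matrix n n R} (hA : A.IsHermitian) : star A.trace = A.trace := by
  rw [← trace_conjTranspose, hA.eq]

lemma IsHermitian.posSemidef_mul_self {𝕜 n : Type*} [RCLike 𝕜] [Fintype n]
    {H : Matrix n n 𝕜} (hH : H.IsHermitian) : (H * H).PosSemidef := by
  simpa [hH.eq] using posSemidef_conjTranspose_mul_self H

section Loewner

variable {𝕜 m n : Type*} [RCLike 𝕜] [Fintype m] [DecidableEq m] [Fintype n] [DecidableEq n]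

lemma PosSemidef.trace_mul_nonneg {σ X : Matrix n n 𝕜} (hσ : σ.PosSemidef) (hX : X.PosSemidef) :
    0 ≤ (σ * X).trace := by
  obtain ⟨P, rfl⟩ := CStarAlgebra.nonneg_iff_eq_star_mul_self.mp hX.nonneg
  rw [← mul_assoc, trace_mul_cycle, star_eq_conjTranspose]
  exact (hσ.mul_mul_conjTranspose_same P).trace_nonneg

lemma trace_mul_le_of_le_smul_one {σ X : Matrix n n 𝕜} (hσ : σ.PosSemidef) {c : ℝ}
    (hX : X ≤ c • 1) : (σ * X).trace ≤ c • σ.trace := by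
  have h := hσ.trace_mul_nonneg hX
  rwa [mul_sub, trace_sub, mul_smul_comm, mul_one, trace_smul, sub_nonneg] at h

lemma kronecker_le_smul_one {X : Matrix m m 𝕜} {Y : Matrix n n 𝕜} {a b : ℝ}
    (ha : 0 ≤ a) (hX : X ≤ a • 1) (hY₀ : 0 ≤ Y) (hY : Y ≤ b • 1) :
    X ⊗ₖ Y ≤ (a * b) • 1 := by
  have h : (a * b) • (1 : Matrix (m × n) (m × n) 𝕜) - X ⊗ₖ Y
      = (a • 1 - X) ⊗ₖ Y + (a • 1 : Matrix m m 𝕜) ⊗ₖ (b • 1 - Y) := by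
    rw [sub_kronecker, kronecker_sub, smul_kronecker, smul_kronecker, kronecker_smul,
      one_kronecker_one, smul_smul]
    abel
  rw [le_iff, h]
  exact ((le_iff.mp hX).kronecker (nonneg_iff_posSemidef.mp hY₀)).add
    ((PosSemidef.one.smul ha).kronecker (le_iff.mp hY))

end Loewner

open scoped Norms.L2Operator in
lemma IsHermitian.le_opNorm_smul_one {d : ℕ} {M : Matrix (Fin d) (Fin d) ℂ}
    (hM : M.IsHermitian) : M ≤ opNorm M • 1 := by
  have h := hM.isSelfAdjoint.le_algebraMap_norm_self
  rwa [Algebra.algebraMap_eq_smul_one] at h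

end Matrix

section ThirdMoment

variable {n K : Type*} [Fintype n] [DecidableEq n] [Fintype K]

noncomputable def thirdMoment (U : K → Matrix n n ℂ) (p : K → ℝ) (B : Matrix n n ℂ) :
    Matrix n n ℂ :=
  ∑ k, (p k : ℂ) • ∑ b, ((U k * B * (U k)ᴴ) b b) ^ 2 • ((U k)ᴴ * single b b 1 * U k)

lemma thirdMoment_nonneg (U : K → Matrix n n ℂ) {p : K → ℝ} (hp : ∀ k, 0 ≤ p k)
    {B : Matrix n n ℂ} (hB : B.IsHermitian) : 0 ≤ thirdMoment U p B := by
  refine nonneg_iff_posSemidef.mpr <| posSemidef_sum _ fun k _ ↦ .smul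
    (posSemidef_sum _ fun b _ ↦ .smul ?_ ?_) (by exact_mod_cast hp k)
  · rw [← diagonal_single]
    exact (PosSemidef.diagonal (Pi.single_nonneg.mpr zero_le_one)).conjTranspose_mul_mul_same _
  · have hdiag : star ((U k * B * (U k)ᴴ) b b) = (U k * B * (U k)ᴴ) b b :=
      (isHermitian_mul_mul_conjTranspose (U k) hB).apply b b
    rw [sq]
    nth_rw 1 [← hdiag]
    exact star_mul_self_nonneg _

lemma trace_mul_kronecker_thirdMoment {m L : Type*} [Fintype m] [DecidableEq m] [Fintype L]
    (σ : Matrix (n × m) (n × m) ℂ) (U : K → Matrix n n ℂ) (p : K → ℝ) (A : Matrix n n ℂ)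
    (V : L → Matrix m m ℂ) (q : L → ℝ) (B : Matrix m m ℂ) :
    (σ * (thirdMoment U p A ⊗ₖ thirdMoment V q B)).trace
      = ∑ k, ∑ l, ((p k * q l : ℝ) : ℂ) * ∑ b₁, ∑ b₂,
          (σ * (((U k)ᴴ * single b₁ b₁ 1 * U k) ⊗ₖ ((V l)ᴴ * single b₂ b₂ 1 * V l))).trace *
            ((U k * A * (U k)ᴴ) b₁ b₁) ^ 2 * ((V l * B * (V l)ᴴ) b₂ b₂) ^ 2 := by
  simp only [thirdMoment, trace_mul_kronecker_sum_smul, Finset.mul_sum, Complex.ofReal_mul]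
  refine Finset.sum_congr rfl fun _ _ ↦ Finset.sum_congr rfl fun _ _ ↦
    Finset.sum_congr rfl fun _ _ ↦ Finset.sum_congr rfl fun _ _ ↦ by ring

end ThirdMoment

section Design

variable {d : ℕ}

/-- The inverse of the measurement channel of Clifford classical shadows. -/
noncomputable def shadowInverse (A : Matrix (Fin d) (Fin d) ℂ) : Matrix (Fin d) (Fin d) ℂ :=
  ((d : ℂ) + 1) • A - trace A • 1

noncomputable def designThirdMoment (B : Matrix (Fin d) (Fin d) ℂ) : Matrix (Fin d) (Fin d) ℂ :=
  (((d : ℂ) + 1) * ((d : ℂ) + 2))⁻¹ •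
    ((trace B ^ 2 + trace (B * B)) • 1 + (2 * trace B) • B + (2 : ℂ) • (B * B))

lemma MomentIdentities.thirdMoment_eq {K : Type} [Fintype K] {U : K → Matrix (Fin d) (Fin d) ℂ}
    {p : K → ℝ} (h : MomentIdentities U p) {B : Matrix (Fin d) (Fin d) ℂ} (hB : B.IsHermitian) :
    thirdMoment U p B = designThirdMoment B :=
  h.2 B hB

lemma Matrix.IsHermitian.shadowInverse {A : Matrix (Fin d) (Fin d) ℂ} (hA : A.IsHermitian) :
    (shadowInverse A).IsHermitian := by
  simp [_root_.shadowInverse, IsHermitian, conjTranspose_smul, hA.eq, hA.star_trace]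

lemma Matrix.IsHermitian.Smat {A : Matrix (Fin d) (Fin d) ℂ} (hA : A.IsHermitian) :
    (Smat A).IsHermitian := by
  simp [_root_.Smat, IsHermitian, conjTranspose_smul, conjTranspose_mul, hA.eq, hA.star_trace,
    hA.posSemidef_mul_self.isHermitian.star_trace]

lemma smul_Smat_sub_designThirdMoment_shadowInverse (A : Matrix (Fin d) (Fin d) ℂ) :
    ((d : ℂ) + 2) • (Smat A - designThirdMoment (shadowInverse A))
      = (2 * (d : ℂ) + 5) • ((trace A • 1 + A) * (trace A • 1 + A)) + A * A
        + ((2 * (d : ℂ) + 4) * trace A ^ 2 + ((d : ℂ) + 3) * trace (A * A)) • 1 := by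
  have hd1 : ((d : ℂ) + 1) ≠ 0 := by norm_cast
  have hd2 : ((d : ℂ) + 2) ≠ 0 := by norm_cast
  simp only [_root_.Smat, designThirdMoment, _root_.shadowInverse, trace_sub, trace_smul,
    trace_one, Fintype.card_fin, sub_mul, mul_sub, add_mul, mul_add, smul_mul_assoc,
    mul_smul_comm, one_mul, mul_one, smul_eq_mul]
  match_scalars <;> field_simp <;> ring

lemma designThirdMoment_shadowInverse_le_Smat {A : Matrix (Fin d) (Fin d) ℂ}
    (hA : A.IsHermitian) : designThirdMoment (shadowInverse A) ≤ Smat A := by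
  have htA : 0 ≤ trace A ^ 2 := by
    rw [sq]
    nth_rw 1 [← hA.star_trace]
    exact star_mul_self_nonneg _
  have hsA : 0 ≤ trace (A * A) := hA.posSemidef_mul_self.trace_nonneg
  have hshift : (trace A • 1 + A).IsHermitian := by
    simp [IsHermitian, conjTranspose_smul, hA.eq, hA.star_trace]
  have hsum : (((d : ℂ) + 2) • (Smat A - designThirdMoment (shadowInverse A))).PosSemidef := by
    rw [smul_Smat_sub_designThirdMoment_shadowInverse]
    exact ((hshift.posSemidef_mul_self.smul (by positivity)).add hA.posSemidef_mul_self).add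
      (PosSemidef.one.smul (by positivity))
  have hd : ((d : ℂ) + 2) ≠ 0 := by norm_cast
  rw [le_iff]
  simpa [smul_smul, hd] using hsum.smul (inv_nonneg.mpr (by positivity : (0 : ℂ) ≤ (d : ℂ) + 2))

lemma MomentIdentities.thirdMoment_shadowInverse_le {K : Type} [Fintype K]
    {U : K → Matrix (Fin d) (Fin d) ℂ} {p : K → ℝ} (h : MomentIdentities U p)
    {A : Matrix (Fin d) (Fin d) ℂ} (hA : A.IsHermitian) :
    thirdMoment U p (shadowInverse A) ≤ opNorm (Smat A) • 1 :=
  (h.thirdMoment_eq hA.shadowInverse).trans_le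
    ((designThirdMoment_shadowInverse_le_Smat hA).trans hA.Smat.le_opNorm_smul_one)

end Design

theorem stmt_1_general {d₁ d₂ : ℕ}
    {K L : Type} [Fintype K] [Fintype L]
    (U : K → Matrix (Fin d₁) (Fin d₁) ℂ) (p : K → ℝ)
    (V : L → Matrix (Fin d₂) (Fin d₂) ℂ) (q : L → ℝ)
    (hq : ∀ l, 0 ≤ q l)
    (hmomU : MomentIdentities U p) (hmomV : MomentIdentities V q)
    (A : Matrix (Fin d₁) (Fin d₁) ℂ) (hA : A.IsHermitian)
    (B : Matrix (Fin d₂) (Fin d₂) ℂ) (hB : B.IsHermitian)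
    (σ : Matrix (Fin d₁ × Fin d₂) (Fin d₁ × Fin d₂) ℂ)
    (hσ : σ.PosSemidef) (hσtr : σ.trace = 1) :
    ∑ k, ∑ l, ((p k * q l : ℝ) : ℂ) *
      ∑ b₁ : Fin d₁, ∑ b₂ : Fin d₂,
        Matrix.trace (σ *
            (((U k)ᴴ * Matrix.single b₁ b₁ 1 * U k) ⊗ₖ
              ((V l)ᴴ * Matrix.single b₂ b₂ 1 * V l))) *
          ((U k * (((d₁ : ℂ) + 1) • A - Matrix.trace A • 1) * (U k)ᴴ) b₁ b₁) ^ 2 *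
          ((V l * (((d₂ : ℂ) + 1) • B - Matrix.trace B • 1) * (V l)ᴴ) b₂ b₂) ^ 2
      ≤ ((4 * opNorm (Smat A) * opNorm (Smat B) : ℝ) : ℂ) := by
  have hsa : 0 ≤ opNorm (Smat A) := norm_nonneg _
  have hsb : 0 ≤ opNorm (Smat B) := norm_nonneg _
  have hXY := kronecker_le_smul_one hsa (hmomU.thirdMoment_shadowInverse_le hA)
    (thirdMoment_nonneg V hq hB.shadowInverse) (hmomV.thirdMoment_shadowInverse_le hB)
  calc _ = (σ * (thirdMoment U p (shadowInverse A) ⊗ₖ thirdMoment V q (shadowInverse B))).trace :=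
        (trace_mul_kronecker_thirdMoment σ U p _ V q _).symm
    _ ≤ (opNorm (Smat A) * opNorm (Smat B)) • σ.trace := trace_mul_le_of_le_smul_one hσ hXY
    _ ≤ _ := by
      rw [hσtr, Complex.real_smul, mul_one, Complex.real_le_real]
      linarith [mul_nonneg hsa hsb]

/-- Squared shadow-norm bound for `ρᵀ ⊗ O` in the Clifford–Clifford case:
the design-averaged fourth-moment sum against any normalized positive semidefinite
state `σ` on the bipartite space is at most `4·‖𝒮(A)‖·‖𝒮(B)‖`. -/
theorem stmt_1 {d₁ d₂ : ℕ} (hd₁ : 1 ≤ d₁) (hd₂ : 1 ≤ d₂)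
    {K L : Type} [Fintype K] [Fintype L]
    (U : K → Matrix (Fin d₁) (Fin d₁) ℂ) (p : K → ℝ)
    (V : L → Matrix (Fin d₂) (Fin d₂) ℂ) (q : L → ℝ)
    (hU : ∀ k, U k ∈ Matrix.unitaryGroup (Fin d₁) ℂ)
    (hV : ∀ l, V l ∈ Matrix.unitaryGroup (Fin d₂) ℂ)
    (hp : ∀ k, 0 ≤ p k) (hpsum : ∑ k, p k = 1)
    (hq : ∀ l, 0 ≤ q l) (hqsum : ∑ l, q l = 1)
    (hmomU : MomentIdentities U p) (hmomV : MomentIdentities V q)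
    (A : Matrix (Fin d₁) (Fin d₁) ℂ) (hA : A.IsHermitian)
    (B : Matrix (Fin d₂) (Fin d₂) ℂ) (hB : B.IsHermitian)
    (σ : Matrix (Fin d₁ × Fin d₂) (Fin d₁ × Fin d₂) ℂ)
    (hσ : σ.PosSemidef) (hσtr : σ.trace = 1) :
    ∑ k, ∑ l, ((p k * q l : ℝ) : ℂ) *
      ∑ b₁ : Fin d₁, ∑ b₂ : Fin d₂,
        Matrix.trace (σ *
            (((U k)ᴴ * Matrix.single b₁ b₁ 1 * U k) ⊗ₖ
              ((V l)ᴴ * Matrix.single b₂ b₂ 1 * V l))) *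
          ((U k * (((d₁ : ℂ) + 1) • A - Matrix.trace A • 1) * (U k)ᴴ) b₁ b₁) ^ 2 *
          ((V l * (((d₂ : ℂ) + 1) • B - Matrix.trace B • 1) * (V l)ᴴ) b₂ b₂) ^ 2
      ≤ ((4 * opNorm (Smat A) * opNorm (Smat B) : ℝ) : ℂ) :=
  stmt_1_general U p V q hq hmomU hmomV A hA B hB σ hσ hσtr
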